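/- arXiv:2310.03479 — 4 statements merged into one kernel-verified Lean document; each statement's English description precedes it below -/
import Mathlib

section
/- Let $(d_k)_{k\in\mathbb{Z}}$ be an absolutely summable sequence of complex numbers and $D_n = ((d_{i-j}))_{i,j=1}^n$. Then for every positive integer $p$, $\lim_{n\to\infty} \frac{1}{n}\mathrm{Tr}(D_n^p) = \sum_{i_1,\dots,i_p = -\infty}^{\infty} d_{i_1}\cdots d_{i_p}\, \delta_{0, i_1+\cdots+i_p}$, and the right-hand side series converges absolutely. -/
open Matrix Filter

/-- Toeplitz matrix with `(i,j)` entry `d (i - j)`. -/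
def toep (d : ℤ → ℂ) (n : ℕ) : Matrix (Fin n) (Fin n) ℂ :=
  Matrix.of fun i j => d ((i : ℤ) - (j : ℤ))

/-!
Expanding the trace, `Tr (Dₙ ^ p)` is the sum, over closed walks `w : ℤ/p → {0, …, n - 1}`, of
`∏ₜ d (w t - w (t + 1))`. Grouping the walks by their step sequence `i` gives
`(1/n) Tr (Dₙ ^ p) = ∑ᵢ (cₙ(i) / n) d_{i₁} ⋯ d_{i_p}`, where `cₙ(i)` counts the walks with steps `i`.
A walk is determined by its starting point, so `cₙ(i) ≤ n`; the steps of a closed walk sum to `0`,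
and conversely when `∑ i = 0` every start at distance at least `∑ |iₜ|` from both ends of the
interval gives a walk. Hence `cₙ(i) / n → δ_{0, ∑ i}`, and dominated convergence with the summable
majorant `∏ₜ |d_{iₜ}|` yields the limit.
-/

open Finset

theorem Summable.prod_fin_pi_of_nonneg {ι : Type*} {f : ι → ℝ} (hf : Summable f)
    (hf0 : ∀ k, 0 ≤ f k) (p : ℕ) : Summable fun i : Fin p → ι => ∏ t, f (i t) := by
  induction p with
  | zero => exact .of_finite
  | succ q ih =>
    refine (Fin.consEquiv fun _ => ι).summable_iff.mp ?_
    simpa [Function.comp_def, Fin.prod_univ_succ] using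
      hf.mul_of_nonneg ih hf0 fun i => prod_nonneg fun t _ => hf0 (i t)

namespace Matrix

variable {ι R : Type*} [Fintype ι] [DecidableEq ι] [CommSemiring R]

theorem pow_succ_apply_eq_sum_prod (M : Matrix ι ι R) (q : ℕ) (a b : ι) :
    (M ^ (q + 1)) a b =
      ∑ f : Fin q → ι, ∏ t, M ((Fin.cons a f : Fin (q + 1) → ι) t)
        ((Fin.snoc f b : Fin (q + 1) → ι) t) := by
  induction q generalizing a with
  | zero => simp [Fin.snoc]
  | succ q ih =>
    rw [pow_succ', mul_apply, ← (Fin.consEquiv fun _ => ι).sum_comp, Fintype.sum_prod_type]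
    refine sum_congr rfl fun c _ => ?_
    rw [ih, mul_sum]
    refine sum_congr rfl fun f _ => ?_
    simp only [Fin.consEquiv, Equiv.coe_fn_mk, ← Fin.cons_snoc_eq_snoc_cons, Fin.prod_univ_succ,
      Fin.cons_zero, Fin.cons_succ]

theorem trace_pow_eq_sum_prod_finRotate (M : Matrix ι ι R) (p : ℕ) [NeZero p] :
    trace (M ^ p) = ∑ w : Fin p → ι, ∏ t, M (w t) (w (finRotate p t)) := by
  obtain ⟨q, rfl⟩ := Nat.exists_eq_succ_of_ne_zero (NeZero.ne p)
  rw [← (Fin.consEquiv fun _ => ι).sum_comp, Fintype.sum_prod_type]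
  simp [trace, pow_succ_apply_eq_sum_prod, Fin.snoc_eq_cons_rotate]

end Matrix

theorem Fin.sum_Iio_finRotate {G : Type*} [AddCommGroup G] {p : ℕ} {i : Fin p → G}
    (hi : ∑ t, i t = 0) (t : Fin p) :
    ∑ s ∈ Iio (finRotate p t), i s = ∑ s ∈ Iio t, i s + i t := by
  by_cases ht : (t : ℕ) + 1 < p
  · have := t.neZero
    rw [finRotate_apply, Fin.Iio_add_one_eq_Iic ht, ← Iio_insert, sum_insert (by simp), add_comm]
  · obtain ⟨q, rfl⟩ := Nat.exists_eq_add_one_of_ne_zero t.pos.ne'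
    obtain rfl : t = Fin.last q := Fin.ext (by simp; omega)
    have hIio : Iio (Fin.last q) = univ.erase (Fin.last q) := by
      ext s; rw [mem_Iio, mem_erase, Fin.lt_last_iff_ne_last]; simp
    have hIio0 : Iio (0 : Fin (q + 1)) = ∅ := by ext s; simp
    rw [finRotate_last, hIio, sum_erase_add _ _ (mem_univ _), hi, hIio0, sum_empty]

def cyclicDiff {n p : ℕ} (w : Fin p → Fin n) (t : Fin p) : ℤ :=
  (w t : ℤ) - w (finRotate p t)

theorem sum_cyclicDiff {n p : ℕ} (w : Fin p → Fin n) : ∑ t, cyclicDiff w t = 0 := by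
  simp only [cyclicDiff, sum_sub_distrib, Equiv.sum_comp (finRotate p) fun t => (w t : ℤ), sub_self]

theorem trace_toep_pow (d : ℤ → ℂ) (n p : ℕ) [NeZero p] :
    trace (toep d n ^ p) = ∑ w : Fin p → Fin n, ∏ t, d (cyclicDiff w t) :=
  trace_pow_eq_sum_prod_finRotate _ p

theorem eq_of_cyclicDiff_eq {n p : ℕ} [NeZero p] {v w : Fin p → Fin n}
    (h : cyclicDiff v = cyclicDiff w) (h0 : v 0 = w 0) : v = w := by
  obtain ⟨q, rfl⟩ := Nat.exists_eq_succ_of_ne_zero (NeZero.ne p)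
  suffices ∀ t, (v t : ℤ) - w t = v 0 - w 0 by
    funext t; have := this t; rw [h0, sub_self] at this; omega
  intro t
  induction t using Fin.induction with
  | zero => rfl
  | succ s ih =>
    have := congrFun h s.castSucc
    simp only [cyclicDiff, finRotate_apply, Fin.coeSucc_eq_succ] at this
    omega

def closedWalkCount {p : ℕ} (n : ℕ) (i : Fin p → ℤ) : ℕ :=
  #{w : Fin p → Fin n | cyclicDiff w = i}

theorem closedWalkCount_eq_zero {p : ℕ} (n : ℕ) {i : Fin p → ℤ} (hi : ∑ t, i t ≠ 0) :
    closedWalkCount n i = 0 := by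
  rw [closedWalkCount, card_eq_zero, filter_eq_empty_iff]
  rintro w - rfl
  exact hi (sum_cyclicDiff w)

theorem closedWalkCount_le {p : ℕ} [NeZero p] (n : ℕ) (i : Fin p → ℤ) :
    closedWalkCount n i ≤ n := by
  refine (card_le_card_of_injOn (fun w => w 0) (fun _ _ => mem_univ _) ?_).trans_eq (card_fin n)
  intro v hv w hw h0
  simp only [coe_filter, Set.mem_ofPred_eq, mem_univ, true_and] at hv hw
  exact eq_of_cyclicDiff_eq (hv.trans hw.symm) h0

theorem exists_cyclicDiff_eq {n p : ℕ} [NeZero p] {i : Fin p → ℤ} (hi : ∑ t, i t = 0) {a : ℕ}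
    (ha : ∑ t, (i t).natAbs ≤ a) (han : a + ∑ t, (i t).natAbs < n) :
    ∃ w : Fin p → Fin n, cyclicDiff w = i ∧ (w 0 : ℕ) = a := by
  have hbound : ∀ t, |∑ s ∈ Iio t, i s| ≤ ∑ s, (i s).natAbs := fun t => by
    push_cast [Int.natCast_natAbs]
    exact (abs_sum_le_sum_abs _ _).trans
      (sum_le_sum_of_subset_of_nonneg (subset_univ _) fun _ _ _ => abs_nonneg _)
  have hmem : ∀ t, 0 ≤ (a : ℤ) - ∑ s ∈ Iio t, i s ∧ (a : ℤ) - ∑ s ∈ Iio t, i s < n := fun t => by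
    have := abs_le.mp (hbound t); omega
  have hIio0 : Iio (0 : Fin p) = ∅ := by ext s; simp
  refine ⟨fun t => ⟨((a : ℤ) - ∑ s ∈ Iio t, i s).toNat, by have := hmem t; omega⟩, ?_, by simp [hIio0]⟩
  funext t
  simp only [cyclicDiff]
  rw [Int.toNat_of_nonneg (hmem _).1, Int.toNat_of_nonneg (hmem _).1, Fin.sum_Iio_finRotate hi]
  ring

theorem le_closedWalkCount {p : ℕ} [NeZero p] (n : ℕ) {i : Fin p → ℤ} (hi : ∑ t, i t = 0) :
    n - 2 * ∑ t, (i t).natAbs ≤ closedWalkCount n i := by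
  set M := ∑ t, (i t).natAbs
  have hsub : Ico M (n - M) ⊆
      ({w | cyclicDiff w = i} : Finset (Fin p → Fin n)).image fun w => (w 0 : ℕ) := by
    intro a ha
    rw [mem_Ico] at ha
    obtain ⟨w, hw, hw0⟩ := exists_cyclicDiff_eq (n := n) hi ha.1 (by omega)
    exact mem_image.mpr ⟨w, by simp [hw], hw0⟩
  have := (card_le_card hsub).trans card_image_le
  rw [Nat.card_Ico] at this
  exact (by omega : n - 2 * M ≤ n - M - M).trans this

theorem tendsto_closedWalkCount_div {p : ℕ} [NeZero p] {i : Fin p → ℤ} (hi : ∑ t, i t = 0) :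
    Tendsto (fun n : ℕ => (closedWalkCount n i : ℝ) / n) atTop (nhds 1) := by
  set M := ∑ t, (i t).natAbs
  have hlower : Tendsto (fun n : ℕ => 1 - (2 * M : ℝ) / n) atTop (nhds 1) := by
    simpa using tendsto_const_nhds.sub (tendsto_const_div_atTop_nhds_zero_nat (2 * (M : ℝ)))
  refine tendsto_of_tendsto_of_tendsto_of_le_of_le' hlower tendsto_const_nhds ?_
    (.of_forall fun n => div_le_one_of_le₀ (mod_cast closedWalkCount_le n i) n.cast_nonneg)
  filter_upwards [eventually_gt_atTop 0] with n hn
  have : (n : ℝ) ≤ closedWalkCount n i + 2 * M := by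
    have := le_closedWalkCount n hi; exact_mod_cast (by omega : n ≤ closedWalkCount n i + 2 * M)
  rw [one_sub_div (by positivity)]
  gcongr
  linarith

theorem trace_toep_pow_eq_tsum (d : ℤ → ℂ) (n p : ℕ) [NeZero p] :
    trace (toep d n ^ p) = ∑' i : Fin p → ℤ, (closedWalkCount n i : ℂ) * ∏ t, d (i t) := by
  rw [trace_toep_pow, sum_comp (fun i => ∏ t, d (i t)) cyclicDiff,
    tsum_eq_sum (s := univ.image cyclicDiff)]
  · simp only [nsmul_eq_mul]; rfl
  · intro i hi
    rw [closedWalkCount, card_eq_zero.mpr, Nat.cast_zero, zero_mul]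
    exact filter_eq_empty_iff.mpr fun w _ hw => hi (mem_image.mpr ⟨w, mem_univ w, hw⟩)

theorem inv_mul_trace_toep_pow_eq_tsum (d : ℤ → ℂ) (n p : ℕ) [NeZero p] :
    (n : ℂ)⁻¹ * trace (toep d n ^ p) = ∑' i : Fin p → ℤ,
      ((closedWalkCount n i / n : ℝ) : ℂ) * ((∏ t, d (i t)) * if ∑ t, i t = 0 then 1 else 0) := by
  rw [trace_toep_pow_eq_tsum, ← tsum_mul_left]
  refine tsum_congr fun i => ?_
  by_cases hi : ∑ t, i t = 0
  · simp only [hi, if_true, mul_one, Complex.ofReal_div, Complex.ofReal_natCast]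
    ring
  · simp [hi, closedWalkCount_eq_zero n hi]

/-- For an absolutely summable input sequence `d`,
`(1/n) Tr(Dₙᵖ) → ∑_{i₁,…,i_p ∈ ℤ} d_{i₁}⋯d_{i_p} δ_{0, i₁+⋯+i_p}`, and the
right-hand series converges absolutely. -/
theorem normalizedTrace_toeplitz_pow_tendsto (d : ℤ → ℂ)
    (hd : Summable fun k : ℤ => ‖d k‖) (p : ℕ) (hp : 0 < p) :
    Summable
        (fun i : Fin p → ℤ =>
          ‖(∏ t, d (i t)) * (if ∑ t, i t = 0 then (1 : ℂ) else 0)‖) ∧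
      Tendsto (fun n : ℕ => (n : ℂ)⁻¹ * Matrix.trace (toep d n ^ p)) atTop
        (nhds (∑' i : Fin p → ℤ,
          (∏ t, d (i t)) * (if ∑ t, i t = 0 then (1 : ℂ) else 0))) := by
  have : NeZero p := ⟨hp.ne'⟩
  set g : (Fin p → ℤ) → ℂ := fun i => (∏ t, d (i t)) * if ∑ t, i t = 0 then 1 else 0
  have hg : ∀ i, ‖g i‖ ≤ ∏ t, ‖d (i t)‖ := fun i => by
    by_cases hi : ∑ t, i t = 0 <;> simp [g, hi, norm_prod, prod_nonneg]
  have hsum : Summable fun i => ‖g i‖ :=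
    (hd.prod_fin_pi_of_nonneg (fun _ => norm_nonneg _) p).of_nonneg_of_le (fun _ => norm_nonneg _) hg
  refine ⟨hsum, ?_⟩
  simp only [inv_mul_trace_toep_pow_eq_tsum]
  refine tendsto_tsum_of_dominated_convergence hsum (fun i => ?_) (.of_forall fun n i => ?_)
  · by_cases hi : ∑ t, i t = 0
    · have h := ((Complex.continuous_ofReal.tendsto 1).comp
        (tendsto_closedWalkCount_div hi)).mul_const (g i)
      rwa [Function.comp_def, Complex.ofReal_one, one_mul] at h
    · simp [hi]
  · rw [norm_mul, Complex.norm_real, Real.norm_of_nonneg (by positivity)]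
    exact mul_le_of_le_one_left (norm_nonneg _)
      (div_le_one_of_le₀ (mod_cast closedWalkCount_le n i) n.cast_nonneg)
end

section
/- Let $(d_k)$ be absolutely summable, $D_n = ((d_{i-j}))$, and for $m \ge 1$ let $D_{n,m}$ be the truncation with $(i,j)$ entry $d_{i-j}\chi_{[0,m]}(|i-j|)$. Then for any fixed $p\ge 1$ and $\alpha \in (0,1)$, $\lim_{n\to\infty} \frac{1}{n}\big|\mathrm{Tr}(D_n^p) - \mathrm{Tr}((D_{n,\lfloor n^\alpha\rfloor})^p)\big| = 0$. -/
open Matrix Filter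

/-- Truncated Toeplitz matrix: `(i,j)` entry `d (i-j)` if `|i-j| ≤ m`, else `0`. -/
def toepTr (d : ℤ → ℂ) (n m : ℕ) : Matrix (Fin n) (Fin n) ℂ :=
  Matrix.of fun i j => if ((i : ℤ) - (j : ℤ)).natAbs ≤ m then d ((i : ℤ) - (j : ℤ)) else 0

/-!
Work in the max-row-sum norm on matrices, which is submultiplicative. A Toeplitz matrix has
norm at most `S = ∑ |d_k|`, and `D_n - D_{n,m}` is the Toeplitz matrix of the tail
`(d_k)_{|k| > m}`, so its norm is at most the tail sum `T_m`. Telescoping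
`A^p - B^p = ∑ A^i (A - B) B^(p-1-i)` gives `‖D_n^p - D_{n,m}^p‖ ≤ p S^(p-1) T_m`, and a trace is
at most `n` times the norm. Hence the normalized trace difference is at most `p S^(p-1) T_m`
with `m = ⌊n^α⌋ → ∞`, and `T_m → 0`.
-/

section SeminormedRing

variable {R : Type*} [SeminormedRing R] {a b : R} {S : ℝ}

lemma norm_pow_mul_le (ha : ‖a‖ ≤ S) (c : R) (q : ℕ) : ‖a ^ q * c‖ ≤ S ^ q * ‖c‖ := by
  induction q with
  | zero => simp
  | succ q ih =>
    calc ‖a ^ (q + 1) * c‖ = ‖a * (a ^ q * c)‖ := by rw [pow_succ', mul_assoc]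
      _ ≤ ‖a‖ * ‖a ^ q * c‖ := norm_mul_le _ _
      _ ≤ S * (S ^ q * ‖c‖) := mul_le_mul ha ih (norm_nonneg _) ((norm_nonneg a).trans ha)
      _ = S ^ (q + 1) * ‖c‖ := by ring

lemma norm_pow_sub_pow_le (ha : ‖a‖ ≤ S) (hb : ‖b‖ ≤ S) (p : ℕ) :
    ‖a ^ p - b ^ p‖ ≤ p * S ^ (p - 1) * ‖a - b‖ := by
  have hS : 0 ≤ S := (norm_nonneg a).trans ha
  induction p with
  | zero => simp
  | succ q ih =>
    have hpow : (q : ℝ) * S ^ (q - 1) * S = q * S ^ q := by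
      rcases q with _ | q <;> simp [pow_succ, mul_assoc]
    calc ‖a ^ (q + 1) - b ^ (q + 1)‖ = ‖a ^ q * (a - b) + (a ^ q - b ^ q) * b‖ := by
          rw [pow_succ, pow_succ]; noncomm_ring
      _ ≤ ‖a ^ q * (a - b)‖ + ‖a ^ q - b ^ q‖ * ‖b‖ :=
          (norm_add_le _ _).trans (add_le_add le_rfl (norm_mul_le _ _))
      _ ≤ S ^ q * ‖a - b‖ + q * S ^ (q - 1) * ‖a - b‖ * S := by
          gcongr
          exact norm_pow_mul_le ha _ q
      _ = (q + 1 : ℕ) * S ^ (q + 1 - 1) * ‖a - b‖ := by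
          rw [mul_right_comm _ ‖a - b‖, hpow]; push_cast; ring

end SeminormedRing

namespace Matrix

section LinftyOpNorm

attribute [local instance] Matrix.linftyOpSeminormedAddCommGroup

variable {m n α : Type*} [Fintype m] [Fintype n] [SeminormedAddCommGroup α]

lemma linfty_opNorm_le_of_sum_norm_le {A : Matrix m n α} {C : ℝ} (hC : 0 ≤ C)
    (h : ∀ i, ∑ j, ‖A i j‖ ≤ C) : ‖A‖ ≤ C := by
  lift C to NNReal using hC
  rw [linfty_opNorm_def, NNReal.coe_le_coe]
  exact Finset.sup_le fun i _ => by rw [← NNReal.coe_le_coe]; push_cast; exact h i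

lemma norm_entry_le_linfty_opNorm (A : Matrix m n α) (i : m) (j : n) : ‖A i j‖ ≤ ‖A‖ := by
  rw [linfty_opNorm_def]
  calc ‖A i j‖ ≤ ∑ j, ‖A i j‖ :=
        Finset.single_le_sum (fun j _ => norm_nonneg (A i j)) (Finset.mem_univ j)
    _ = ((∑ j, ‖A i j‖₊ : NNReal) : ℝ) := by push_cast; rfl
    _ ≤ _ := NNReal.coe_le_coe.mpr (Finset.le_sup (f := fun i => ∑ j, ‖A i j‖₊) (Finset.mem_univ i))

lemma norm_trace_le_card_mul_linfty_opNorm (A : Matrix n n α) :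
    ‖trace A‖ ≤ Fintype.card n * ‖A‖ :=
  calc ‖trace A‖ ≤ ∑ i, ‖A i i‖ := norm_sum_le _ _
    _ ≤ ∑ _i : n, ‖A‖ := Finset.sum_le_sum fun i _ => norm_entry_le_linfty_opNorm A i i
    _ = Fintype.card n * ‖A‖ := by simp

end LinftyOpNorm

end Matrix

section Toeplitz

attribute [local instance] Matrix.linftyOpNormedRing

lemma norm_toep_le_tsum {f : ℤ → ℂ} {g : ℤ → ℝ} (hg : Summable g) (hfg : ∀ k, ‖f k‖ ≤ g k)
    (n : ℕ) : ‖toep f n‖ ≤ ∑' k, g k := by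
  have hg0 : ∀ k, 0 ≤ g k := fun k => (norm_nonneg _).trans (hfg k)
  refine linfty_opNorm_le_of_sum_norm_le (tsum_nonneg hg0) fun i => ?_
  have hinj : Function.Injective fun j : Fin n => (i : ℤ) - j := fun j j' h => by
    simp only [sub_right_inj, Nat.cast_inj] at h
    exact Fin.ext h
  calc ∑ j, ‖toep f n i j‖ ≤ ∑ j : Fin n, g ((i : ℤ) - j) := Finset.sum_le_sum fun j _ => hfg _
    _ = ∑' j : Fin n, g ((i : ℤ) - j) := (tsum_fintype _).symm
    _ ≤ ∑' k, g k := tsum_comp_le_tsum_of_inj hg hg0 hinj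

def tailPart (d : ℤ → ℂ) (m : ℕ) : ℤ → ℂ := fun k => if k.natAbs ≤ m then 0 else d k

lemma norm_tailPart_le (d : ℤ → ℂ) (m : ℕ) (k : ℤ) : ‖tailPart d m k‖ ≤ ‖d k‖ := by
  unfold tailPart; split_ifs <;> simp

lemma toep_sub_toepTr (d : ℤ → ℂ) (n m : ℕ) : toep d n - toepTr d n m = toep (tailPart d m) n := by
  ext i j
  simp only [toep, toepTr, tailPart, Matrix.sub_apply, of_apply]
  split_ifs <;> simp

lemma tendsto_tsum_norm_tailPart {d : ℤ → ℂ} (hd : Summable fun k => ‖d k‖) :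
    Tendsto (fun m => ∑' k, ‖tailPart d m k‖) atTop (nhds 0) := by
  have hpoint : ∀ k, Tendsto (fun m => ‖tailPart d m k‖) atTop (nhds 0) := fun k =>
    tendsto_const_nhds.congr' <| (eventually_ge_atTop k.natAbs).mono fun m hm => by
      simp [tailPart, hm]
  simpa using tendsto_tsum_of_dominated_convergence hd hpoint
    (Eventually.of_forall fun m k => by simpa using norm_tailPart_le d m k)

lemma norm_trace_pow_toep_sub_toepTr_le {d : ℤ → ℂ} (hd : Summable fun k => ‖d k‖) (n m p : ℕ) :
    ‖trace (toep d n ^ p) - trace (toepTr d n m ^ p)‖ ≤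
      n * (p * (∑' k, ‖d k‖) ^ (p - 1) * ∑' k, ‖tailPart d m k‖) := by
  have hA : ‖toep d n‖ ≤ ∑' k, ‖d k‖ := norm_toep_le_tsum hd (fun _ => le_rfl) n
  have hB : ‖toepTr d n m‖ ≤ ∑' k, ‖d k‖ := by
    -- `toepTr d n m` is definitionally the Toeplitz matrix of the band-limited sequence
    refine norm_toep_le_tsum hd (f := fun k => if k.natAbs ≤ m then d k else 0) (fun k => ?_) n
    split_ifs <;> simp
  have hAB : ‖toep d n - toepTr d n m‖ ≤ ∑' k, ‖tailPart d m k‖ := by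
    rw [toep_sub_toepTr]
    exact norm_toep_le_tsum (hd.of_nonneg_of_le (fun _ => norm_nonneg _) (norm_tailPart_le d m))
      (fun _ => le_rfl) n
  rw [← trace_sub]
  refine (norm_trace_le_card_mul_linfty_opNorm _).trans ?_
  rw [Fintype.card_fin]
  gcongr
  exact (norm_pow_sub_pow_le hA hB p).trans (by gcongr)

end Toeplitz

theorem truncation_trace_negligible_general (d : ℤ → ℂ)
    (hd : Summable fun k : ℤ => ‖d k‖) (p : ℕ)
    (α : ℝ) (hα : α ∈ Set.Ioo (0 : ℝ) 1) :
    Tendsto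
      (fun n : ℕ =>
        (n : ℝ)⁻¹ *
          ‖Matrix.trace (toep d n ^ p) -
            Matrix.trace (toepTr d n ⌊(n : ℝ) ^ α⌋₊ ^ p)‖)
      atTop (nhds 0) := by
  set S := ∑' k, ‖d k‖
  have hwidth : Tendsto (fun n : ℕ => ⌊(n : ℝ) ^ α⌋₊) atTop atTop :=
    tendsto_nat_floor_atTop.comp ((tendsto_rpow_atTop hα.1).comp tendsto_natCast_atTop_atTop)
  have hbound : Tendsto (fun n : ℕ => p * S ^ (p - 1) * ∑' k, ‖tailPart d ⌊(n : ℝ) ^ α⌋₊ k‖)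
      atTop (nhds 0) := by
    simpa using ((tendsto_tsum_norm_tailPart hd).comp hwidth).const_mul (p * S ^ (p - 1))
  refine squeeze_zero (fun n => by positivity) (fun n => ?_) hbound
  exact inv_mul_le_of_le_mul₀ n.cast_nonneg
    (by positivity) (norm_trace_pow_toep_sub_toepTr_le hd n _ p)

/-- For absolutely summable `d`, fixed `p ≥ 1` and `α ∈ (0,1)`,
`(1/n) |Tr(Dₙᵖ) - Tr((D_{n,⌊n^α⌋})ᵖ)| → 0`. -/
theorem truncation_trace_negligible (d : ℤ → ℂ)
    (hd : Summable fun k : ℤ => ‖d k‖) (p : ℕ) (hp : 1 ≤ p)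
    (α : ℝ) (hα : α ∈ Set.Ioo (0 : ℝ) 1) :
    Tendsto
      (fun n : ℕ =>
        (n : ℝ)⁻¹ *
          ‖Matrix.trace (toep d n ^ p) -
            Matrix.trace (toepTr d n ⌊(n : ℝ) ^ α⌋₊ ^ p)‖)
      atTop (nhds 0) :=
  truncation_trace_negligible_general d hd p α hα
end

section
/- Let $(d_k)$ be absolutely summable, $D_n = ((d_{i-j}))$, and $P_n$ the backward identity permutation matrix. If a monomial in $P_n$ and $D_n, D_n^*$ contains an odd number of factors $P_n$, then $\frac{1}{n}\mathrm{Tr}$ of the monomial tends to $0$ as $n\to\infty$. (In particular, $\frac{1}{n}\mathrm{Tr}(P_n D_n^p) \to 0$ for every $p \ge 0$.) -/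
/-!
Call a family `Aₙ` of `n × n` matrices Toeplitz-dominated if `‖Aₙ i j‖ ≤ h (i - j)` for a single
`h ∈ ℓ¹(ℤ)` independent of `n`. Such families are closed under products (the kernels convolve),
under conjugate transposes, and under conjugation by `Pₙ`, which reverses the indices. Since
`Pₙ² = 1`, every factor `Pₙ` of a monomial can be moved to the left, which writes the monomial as
`Pₙ ^ c * Aₙ` with `c` the number of factors `Pₙ` and `Aₙ` Toeplitz-dominated. For odd `c` the
trace is `∑ᵢ Aₙ (rev i) i`, of size at most `∑ᵢ h (n - 1 - 2i) ≤ ‖h‖₁`; so it stays bounded and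
`(1/n) Tr → 0`.
-/

open Matrix Filter

/-- Backward identity permutation matrix. -/
def bId (n : ℕ) : Matrix (Fin n) (Fin n) ℂ :=
  Matrix.of fun i j => if (i : ℕ) + 1 + ((j : ℕ) + 1) = n + 1 then 1 else 0

open scoped ENNReal

section BackwardIdentity

variable {n : ℕ}

lemma bId_apply (i j : Fin n) : bId n i j = if j = i.rev then 1 else 0 := by
  simp only [bId, of_apply, Fin.ext_iff, Fin.val_rev]
  congr 1
  exact propext (by omega)

lemma bId_mul_apply (M : Matrix (Fin n) (Fin n) ℂ) (i j : Fin n) :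
    (bId n * M) i j = M i.rev j := by
  simp [mul_apply, bId_apply]

lemma mul_bId_apply (M : Matrix (Fin n) (Fin n) ℂ) (i j : Fin n) :
    (M * bId n) i j = M i j.rev := by
  simp [mul_apply, bId_apply, ← Fin.rev_eq_iff]

lemma bId_mul_bId : bId n * bId n = 1 := by
  ext i j
  simp [bId_mul_apply, bId_apply, one_apply, eq_comm]

lemma bId_pow_odd {k : ℕ} (hk : Odd k) : bId n ^ k = bId n := by
  obtain ⟨m, rfl⟩ := hk
  rw [pow_succ, pow_mul, sq, bId_mul_bId, one_pow, one_mul]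

lemma bId_pow_mul_bId_pow (k : ℕ) : bId n ^ k * bId n ^ k = 1 := by
  rw [← pow_add, ← two_mul, pow_mul, sq, bId_mul_bId, one_pow]

end BackwardIdentity

lemma ENNReal.tsum_tsum_mul_sub {G : Type*} [AddGroup G] (g h : G → ℝ≥0∞) :
    ∑' w, ∑' u, g u * h (w - u) = (∑' u, g u) * ∑' w, h w := by
  rw [ENNReal.tsum_comm, ← ENNReal.tsum_mul_right]
  refine tsum_congr fun u => ?_
  rw [ENNReal.tsum_mul_left]
  congr 1
  exact (Equiv.subRight u).tsum_eq h

lemma ENNReal.sum_comp_le_tsum {ι κ : Type*} [Fintype ι] {e : ι → κ}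
    (he : Function.Injective e) (h : κ → ℝ≥0∞) : ∑ x, h (e x) ≤ ∑' u, h u := by
  rw [← tsum_fintype (L := SummationFilter.unconditional _)]
  exact ENNReal.tsum_comp_le_tsum_of_injective he h

def ToeplitzDominated (A : ∀ n, Matrix (Fin n) (Fin n) ℂ) : Prop :=
  ∃ h : ℤ → ℝ≥0∞, ∑' k, h k ≠ ∞ ∧ ∀ n (i j : Fin n), ‖A n i j‖ₑ ≤ h (i - j)

namespace ToeplitzDominated

variable {A B : ∀ n, Matrix (Fin n) (Fin n) ℂ}

lemma toep {d : ℤ → ℂ} (hd : Summable fun k => ‖d k‖) : ToeplitzDominated (toep d) :=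
  ⟨fun k => ‖d k‖ₑ, tsum_enorm_ne_top_iff_summable_norm.2 hd, fun _ _ _ => le_rfl⟩

lemma one : ToeplitzDominated 1 := by
  refine ⟨Pi.single 0 1, by simp, fun n i j => ?_⟩
  rcases eq_or_ne i j with rfl | hij
  · simp
  · simp [one_apply_ne hij]

lemma conjTranspose (hA : ToeplitzDominated A) : ToeplitzDominated fun n => (A n)ᴴ := by
  obtain ⟨h, hsum, hle⟩ := hA
  refine ⟨fun k => h (-k), ((Equiv.neg ℤ).tsum_eq h).trans_ne hsum, fun n i j => ?_⟩
  simpa [conjTranspose_apply] using hle n j i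

lemma bId_mul_mul_bId (hA : ToeplitzDominated A) :
    ToeplitzDominated fun n => bId n * A n * bId n := by
  obtain ⟨h, hsum, hle⟩ := hA
  refine ⟨fun k => h (-k), ((Equiv.neg ℤ).tsum_eq h).trans_ne hsum, fun n i j => ?_⟩
  change ‖(bId n * A n * bId n) i j‖ₑ ≤ h (-(i - j))
  rw [mul_bId_apply, bId_mul_apply]
  convert hle n i.rev j.rev using 2
  simp only [Fin.val_rev]
  omega

lemma bId_pow_mul_mul_bId_pow (hA : ToeplitzDominated A) (k : ℕ) :
    ToeplitzDominated fun n => bId n ^ k * A n * bId n ^ k := by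
  induction k with
  | zero => simpa using hA
  | succ k ih =>
    have hpow (n : ℕ) : bId n ^ (k + 1) * A n * bId n ^ (k + 1) =
        bId n * (bId n ^ k * A n * bId n ^ k) * bId n := by
      nth_rw 1 [pow_succ']
      rw [pow_succ]
      simp only [mul_assoc]
    simpa only [hpow] using ih.bId_mul_mul_bId

lemma mul (hA : ToeplitzDominated A) (hB : ToeplitzDominated B) :
    ToeplitzDominated fun n => A n * B n := by
  obtain ⟨g, hg, hgle⟩ := hA
  obtain ⟨h, hh, hhle⟩ := hB
  refine ⟨fun w => ∑' u, g u * h (w - u), ?_, fun n i j => ?_⟩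
  · rw [ENNReal.tsum_tsum_mul_sub]
    exact ENNReal.mul_ne_top hg hh
  have hinj : Function.Injective fun x : Fin n => (i : ℤ) - x := by
    intro x y hxy
    simpa [Fin.ext_iff] using hxy
  calc ‖(A n * B n) i j‖ₑ ≤ ∑ x, ‖A n i x‖ₑ * ‖B n x j‖ₑ := by
        simpa only [mul_apply, enorm_mul] using
          enorm_sum_le Finset.univ fun x => A n i x * B n x j
    _ ≤ ∑ x : Fin n, g (i - x) * h ((i - j) - (i - x)) := by
        gcongr with x
        · exact hgle n i x
        · exact (hhle n x j).trans_eq (by ring_nf)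
    _ ≤ ∑' u, g u * h ((i - j) - u) :=
        ENNReal.sum_comp_le_tsum hinj fun u => g u * h ((i - j) - u)

lemma pow (hA : ToeplitzDominated A) (p : ℕ) : ToeplitzDominated fun n => A n ^ p := by
  induction p with
  | zero => exact one
  | succ p ih => simpa only [pow_succ] using ih.mul hA

lemma tendsto_inv_mul_trace_bId_mul (hA : ToeplitzDominated A) :
    Tendsto (fun n : ℕ => (n : ℂ)⁻¹ * trace (bId n * A n)) atTop (nhds 0) := by
  obtain ⟨h, hsum, hle⟩ := hA
  have htrace (n : ℕ) : ‖trace (bId n * A n)‖ₑ ≤ ∑' k, h k := by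
    have hinj : Function.Injective fun i : Fin n => (i.rev : ℤ) - i := by
      intro x y hxy
      simp only [Fin.val_rev] at hxy
      ext
      omega
    calc ‖trace (bId n * A n)‖ₑ ≤ ∑ i, ‖A n i.rev i‖ₑ := by
          simpa only [trace, diag, bId_mul_apply] using enorm_sum_le _ _
      _ ≤ ∑ i : Fin n, h (i.rev - i) := by gcongr with i; exact hle n _ _
      _ ≤ ∑' k, h k := ENNReal.sum_comp_le_tsum hinj h
  refine squeeze_zero_norm (fun n => ?_)
    (tendsto_const_div_atTop_nhds_zero_nat (∑' k, h k).toReal)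
  rw [norm_mul, norm_inv, Complex.norm_natCast, div_eq_inv_mul]
  gcongr
  exact ENNReal.toReal_mono hsum (by simpa using htrace n)

end ToeplitzDominated

lemma List.count_ofFn {α : Type*} [DecidableEq α] {k : ℕ} (s : Fin k → α) (a : α) :
    (List.ofFn s).count a = (Finset.univ.filter fun t => s t = a).card := by
  rw [← Multiset.coe_count, ← Fin.univ_val_map, Multiset.count_map, Finset.card_def,
    Finset.filter_val]
  simp only [eq_comm]

def monomialFactor (d : ℤ → ℂ) (c : Fin 3) (n : ℕ) : Matrix (Fin n) (Fin n) ℂ :=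
  if c = 0 then bId n else if c = 1 then toep d n else (toep d n)ᴴ

lemma ToeplitzDominated.monomialFactor {d : ℤ → ℂ} (hd : Summable fun k => ‖d k‖) {c : Fin 3}
    (hc : c ≠ 0) : ToeplitzDominated (monomialFactor d c) := by
  by_cases hc1 : c = 1
  · convert ToeplitzDominated.toep hd using 1
    simp [funext_iff, _root_.monomialFactor, hc1]
  · convert (ToeplitzDominated.toep hd).conjTranspose using 1
    simp [funext_iff, _root_.monomialFactor, hc, hc1]

lemma exists_toeplitzDominated_prod_eq_bId_pow_mul {d : ℤ → ℂ} (hd : Summable fun k => ‖d k‖)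
    (L : List (Fin 3)) :
    ∃ A, ToeplitzDominated A ∧
      ∀ n, (L.map fun c => monomialFactor d c n).prod = bId n ^ L.count 0 * A n := by
  induction L with
  | nil => exact ⟨1, .one, fun n => by simp⟩
  | cons c L ih =>
    obtain ⟨A, hA, hprod⟩ := ih
    by_cases hc : c = 0
    · subst hc
      refine ⟨A, hA, fun n => ?_⟩
      rw [List.map_cons, List.prod_cons, hprod, List.count_cons_self, pow_succ', mul_assoc]
      simp [monomialFactor]
    -- `T * P ^ k = P ^ k * (P ^ k * T * P ^ k)` because `P ^ k * P ^ k = 1`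
    refine ⟨fun n => bId n ^ L.count 0 * monomialFactor d c n * bId n ^ L.count 0 * A n,
      ((ToeplitzDominated.monomialFactor hd hc).bId_pow_mul_mul_bId_pow _).mul hA, fun n => ?_⟩
    rw [List.map_cons, List.prod_cons, hprod, List.count_cons_of_ne hc]
    simp only [← mul_assoc, bId_pow_mul_bId_pow, one_mul]

/-- If a monomial in `Pₙ`, `Dₙ`, `Dₙ*` (factors encoded by `s t = 0, 1, 2`
respectively) contains an odd number of factors `Pₙ`, then `(1/n) Tr` of the
monomial tends to `0`; in particular `(1/n) Tr(Pₙ Dₙᵖ) → 0` for every `p`. -/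
theorem normalizedTrace_odd_P_monomial_tendsto_zero (d : ℤ → ℂ)
    (hd : Summable fun k : ℤ => ‖d k‖) :
    (∀ (k : ℕ) (s : Fin k → Fin 3),
        Odd (Finset.univ.filter fun t => s t = 0).card →
          Tendsto
            (fun n : ℕ =>
              (n : ℂ)⁻¹ *
                Matrix.trace
                  (List.ofFn fun t =>
                    if s t = 0 then bId n
                    else if s t = 1 then toep d n else (toep d n)ᴴ).prod)
            atTop (nhds 0)) ∧
      ∀ p : ℕ,
        Tendsto (fun n : ℕ => (n : ℂ)⁻¹ * Matrix.trace (bId n * toep d n ^ p))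
          atTop (nhds 0) := by
  refine ⟨fun k s hodd => ?_,
    fun p => ((ToeplitzDominated.toep hd).pow p).tendsto_inv_mul_trace_bId_mul⟩
  obtain ⟨A, hA, hprod⟩ := exists_toeplitzDominated_prod_eq_bId_pow_mul hd (List.ofFn s)
  rw [List.count_ofFn] at hprod
  refine hA.tendsto_inv_mul_trace_bId_mul.congr fun n => ?_
  have hfactors : (fun t => if s t = 0 then bId n else if s t = 1 then toep d n else (toep d n)ᴴ)
      = (fun c => monomialFactor d c n) ∘ s := rfl
  rw [hfactors, ← List.map_ofFn, hprod, bId_pow_odd hodd]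
end

section
/- Let $(a_j)_{j\in\mathbb{Z}}$ be independent real random variables with mean zero, all moments uniformly bounded, and $T_n = ((a_{i-j}))$ the random Toeplitz matrix. For every $p \ge 1$, the normalized expected trace $\frac{1}{n^{1+p/2}}\mathbf{E}\,\mathrm{Tr}(T_n^p)$ is bounded uniformly in $n$: there is a constant $C_p$ (depending only on $p$ and the moment bounds) with $\big|\frac{1}{n^{1+p/2}}\mathbf{E}\,\mathrm{Tr}(T_n^p)\big| \le C_p$ for all $n$. -/
open Matrix Filter MeasureTheory ProbabilityTheory Finset

/-!
Expanding the trace, `E Tr(Tₙᵖ) = ∑ᵢ E ∏ₖ a (iₖ - iₖ₊₁)`, the sum running over closed index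
cycles `i : ℤ/p → {0, …, n-1}`. By independence and `E a_j = 0`, a cycle contributes only if every
value of its increment vector occurs at least twice, and its contribution is then a product of
moments of order at most `p`. A cycle is determined by its starting point and its increments; an
increment vector in `[-n, n]ᵖ` with all values repeated is determined by its coincidence pattern
(at most `pᵖ` choices) and by its at most `p / 2` distinct values. Hence at most
`n · pᵖ · (2n + 1)^(p/2) = O(n^(1 + p/2))` cycles contribute.
-/

namespace Matrix

variable {n R : Type*} [Fintype n] [DecidableEq n] [CommSemiring R]

theorem pow_succ_apply_eq_sum (M : Matrix n n R) (p : ℕ) (x y : n) :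
    (M ^ (p + 1)) x y = ∑ i : Fin p → n, ∏ k : Fin (p + 1),
      M (Fin.cons (α := fun _ => n) x i k) (Fin.snoc (α := fun _ => n) i y k) := by
  induction p generalizing y with
  | zero => simp [Fin.snoc]
  | succ p ih =>
    rw [pow_succ, mul_apply, ← (Fin.snocEquiv fun _ => n).sum_comp, Fintype.sum_prod_type]
    refine Finset.sum_congr rfl fun z _ => ?_
    rw [ih, Finset.sum_mul]
    refine Finset.sum_congr rfl fun i _ => ?_
    simp [Fin.prod_univ_castSucc, Fin.snocEquiv, Fin.cons_snoc_eq_snoc_cons]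

theorem trace_pow_succ_eq_sum (M : Matrix n n R) (p : ℕ) :
    trace (M ^ (p + 1)) = ∑ i : Fin (p + 1) → n, ∏ k : Fin (p + 1), M (i k) (i (k + 1)) := by
  simp only [trace, diag, pow_succ_apply_eq_sum]
  rw [← (Fin.consEquiv fun _ => n).sum_comp, Fintype.sum_prod_type]
  refine Finset.sum_congr rfl fun x _ => Finset.sum_congr rfl fun i _ => ?_
  refine Finset.prod_congr rfl fun k _ => ?_
  congr 1
  induction k using Fin.lastCases with
  | last => simp
  | cast k => simp [Fin.coeSucc_eq_succ]

end Matrix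

def EachValueRepeated {κ ι : Type*} (d : κ → ι) : Prop := ∀ k, ∃ k' ≠ k, d k' = d k

instance {κ ι : Type*} [Fintype κ] [DecidableEq κ] [DecidableEq ι] :
    DecidablePred (EachValueRepeated (κ := κ) (ι := ι)) :=
  fun _ => inferInstanceAs (Decidable (∀ _, _))

-- `⟨k⟩ : Nonempty κ` is a proof, so `fiberRep d k` depends on `k` only through `d k`.
noncomputable def fiberRep {κ ι : Type*} (d : κ → ι) (k : κ) : κ :=
  @Classical.epsilon κ ⟨k⟩ fun m => d m = d k

theorem apply_fiberRep {κ ι : Type*} (d : κ → ι) (k : κ) : d (fiberRep d k) = d k :=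
  @Classical.epsilon_spec κ (fun m => d m = d k) ⟨k, rfl⟩

theorem fiberRep_eq_of_apply_eq {κ ι : Type*} {d : κ → ι} {k k' : κ} (h : d k = d k') :
    fiberRep d k = fiberRep d k' := by
  simp only [fiberRep, h]

section Counting

variable {κ ι : Type*} [Fintype κ] [DecidableEq ι]

theorem EachValueRepeated.card_image_le {d : κ → ι} (hd : EachValueRepeated d) :
    #(univ.image d) ≤ Fintype.card κ / 2 := by
  have hfiber : ∀ v ∈ univ.image d, 2 ≤ #{k | d k = v} := by
    simp only [mem_image, mem_univ, true_and, forall_exists_index, forall_apply_eq_imp_iff]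
    intro k
    obtain ⟨k', hne, hk'⟩ := hd k
    exact one_lt_card.2 ⟨k', by simp [hk'], k, by simp, hne⟩
  have h := card_eq_sum_card_image d univ
  have := sum_le_sum hfiber
  rw [sum_const, smul_eq_mul] at this
  rw [card_univ] at h
  omega

theorem card_image_fiberRep_le [DecidableEq κ] (d : κ → ι) :
    #(univ.image (fiberRep d)) ≤ #(univ.image d) := by
  refine card_le_card_of_injOn d (fun _ _ => by simp) ?_
  simp only [coe_image, coe_univ, Set.image_univ, Set.InjOn, Set.mem_range]
  rintro _ ⟨k, rfl⟩ _ ⟨k', rfl⟩ h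
  rw [apply_fiberRep d, apply_fiberRep d] at h
  exact fiberRep_eq_of_apply_eq h

theorem card_filter_fiberRep_eq_le [DecidableEq κ] (s : Finset ι) (hs : s.Nonempty)
    (r : κ → κ) :
    #{d ∈ Fintype.piFinset (fun _ : κ => s) | EachValueRepeated d ∧ fiberRep d = r}
      ≤ #s ^ (Fintype.card κ / 2) := by
  set S := {d ∈ Fintype.piFinset (fun _ : κ => s) | EachValueRepeated d ∧ fiberRep d = r}
  rcases S.eq_empty_or_nonempty with hS | ⟨d₀, hd₀⟩
  · simp [hS]
  simp only [S, mem_filter] at hd₀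
  obtain ⟨-, hrep, rfl⟩ := hd₀
  set F := univ.image (fiberRep d₀)
  have hinj : Set.InjOn (fun (d : κ → ι) (m : F) => d m) S := by
    intro d hd d' hd' h
    simp only [S, coe_filter, Set.mem_ofPred_eq] at hd hd'
    funext k
    have hk : fiberRep d₀ k ∈ F := mem_image_of_mem _ (mem_univ k)
    rw [← apply_fiberRep d k, ← apply_fiberRep d' k, hd.2.2, hd'.2.2]
    exact congrFun h ⟨_, hk⟩
  calc #S ≤ #(Fintype.piFinset fun _ : F => s) :=
        card_le_card_of_injOn _ (fun d hd => by
          simp only [S, coe_filter, Set.mem_ofPred_eq, Fintype.mem_piFinset] at hd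
          simpa using fun m _ => hd.1 m) hinj
    _ = #s ^ #F := by simp
    _ ≤ #s ^ (Fintype.card κ / 2) :=
        Nat.pow_le_pow_right hs.card_pos ((card_image_fiberRep_le d₀).trans hrep.card_image_le)

theorem card_filter_eachValueRepeated_le [DecidableEq κ] (s : Finset ι) :
    #{d ∈ Fintype.piFinset (fun _ : κ => s) | EachValueRepeated d}
      ≤ Fintype.card κ ^ Fintype.card κ * #s ^ (Fintype.card κ / 2) := by
  rcases s.eq_empty_or_nonempty with rfl | hs
  · refine (card_filter_le _ _).trans ?_
    rw [Fintype.card_piFinset, prod_const, card_univ]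
    rcases Fintype.card κ with _ | c <;> simp
  classical
  rw [card_eq_sum_card_fiberwise (f := fiberRep) (t := univ) fun _ _ => mem_univ _]
  calc ∑ r : κ → κ, #{d ∈ {d ∈ Fintype.piFinset (fun _ : κ => s) | EachValueRepeated d} |
          fiberRep d = r}
      ≤ ∑ _r : κ → κ, #s ^ (Fintype.card κ / 2) := by
        refine sum_le_sum fun r _ => ?_
        rw [filter_filter]
        exact card_filter_fiberRep_eq_le s hs r
    _ = _ := by simp

end Counting

def cyclicIncrements {p : ℕ} (x : Fin (p + 1) → ℤ) (k : Fin (p + 1)) : ℤ := x k - x (k + 1)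

theorem eq_of_cyclicIncrements_eq {p : ℕ} {x y : Fin (p + 1) → ℤ} (h₀ : x 0 = y 0)
    (h : cyclicIncrements x = cyclicIncrements y) : x = y := by
  funext k
  induction k using Fin.induction with
  | zero => exact h₀
  | succ k ih =>
    have := congrFun h k.castSucc
    simp only [cyclicIncrements, Fin.coeSucc_eq_succ] at this
    omega

theorem card_filter_eachValueRepeated_cyclicIncrements_le (n p : ℕ) :
    #{i : Fin (p + 1) → Fin n | EachValueRepeated (cyclicIncrements fun k => (i k : ℤ))}
      ≤ n * ((p + 1) ^ (p + 1) * (2 * n + 1) ^ ((p + 1) / 2)) := by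
  set D := {d ∈ Fintype.piFinset fun _ : Fin (p + 1) => Icc (-(n : ℤ)) n | EachValueRepeated d}
  calc _ ≤ #(univ ×ˢ D) := by
        refine card_le_card_of_injOn (fun i => (i 0, cyclicIncrements fun k => (i k : ℤ))) ?_ ?_
        · intro i hi
          simp only [coe_filter, mem_univ, true_and, Set.mem_ofPred_eq] at hi
          simp only [D, coe_product, coe_univ, coe_filter, Set.mem_prod, Set.mem_univ, true_and,
            Set.mem_ofPred_eq, Fintype.mem_piFinset, mem_Icc, hi, and_true]
          intro k
          have := (i k).isLt
          have := (i (k + 1)).isLt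
          simp only [cyclicIncrements]
          omega
        · intro i _ i' _ h
          simp only [Prod.mk.injEq] at h
          have := eq_of_cyclicIncrements_eq (by simp [h.1]) h.2
          funext k
          exact Fin.ext (by exact_mod_cast congrFun this k)
    _ ≤ n * ((p + 1) ^ (p + 1) * (2 * n + 1) ^ ((p + 1) / 2)) := by
        rw [card_product, card_univ, Fintype.card_fin]
        gcongr
        have hIcc : #(Icc (-(n : ℤ)) n) = 2 * n + 1 := by rw [Int.card_Icc]; omega
        simpa [hIcc] using card_filter_eachValueRepeated_le (κ := Fin (p + 1)) (Icc (-(n : ℤ)) n)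

theorem natCast_mul_two_mul_add_one_pow_le (n p : ℕ) :
    (n : ℝ) * (2 * n + 1) ^ (p / 2) ≤ 3 ^ p * (n : ℝ) ^ ((1 : ℝ) + (p : ℝ) / 2) := by
  rcases n.eq_zero_or_pos with rfl | hn
  · simp only [CharP.cast_eq_zero, zero_mul]
    positivity
  have hn : (1 : ℝ) ≤ n := by exact_mod_cast hn
  calc (n : ℝ) * (2 * n + 1) ^ (p / 2) ≤ n * (3 * n) ^ (p / 2) := by gcongr; linarith
    _ = 3 ^ (p / 2) * (n : ℝ) ^ ((p / 2 + 1 : ℕ) : ℝ) := by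
        rw [Real.rpow_natCast]; ring
    _ ≤ 3 ^ p * (n : ℝ) ^ ((1 : ℝ) + (p : ℝ) / 2) := by
        refine mul_le_mul (pow_le_pow_right₀ (by norm_num) (Nat.div_le_self p 2))
          (Real.rpow_le_rpow_of_exponent_le hn ?_) (by positivity) (by positivity)
        push_cast
        linarith [Nat.cast_div_le (m := p) (n := 2) (α := ℝ)]

section Moments

variable {Ω ι κ : Type*} [MeasurableSpace Ω] {μ : Measure Ω} [Fintype κ]

theorem ProbabilityTheory.iIndepFun.integral_prod_comp_eq_prod_moment [DecidableEq ι]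
    {a : ι → Ω → ℝ} (hind : iIndepFun a μ) (hmeas : ∀ j, AEMeasurable (a j) μ) (d : κ → ι) :
    ∫ ω, ∏ k, a (d k) ω ∂μ = ∏ j ∈ univ.image d, ∫ ω, a j ω ^ #{k | d k = j} ∂μ := by
  have hS : iIndepFun (fun j : univ.image d => a j) μ := hind.precomp Subtype.val_injective
  have hprod (ω : Ω) : ∏ k, a (d k) ω = ∏ j ∈ univ.image d, a j ω ^ #{k | d k = j} :=
    prod_comp (fun j => a j ω) d
  simp_rw [hprod]
  simp only [← Finset.prod_coe_sort (univ.image d)]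
  exact hS.integral_fun_prod_comp (f := fun (j : univ.image d) x => x ^ #{k | d k = j})
    (fun j => hmeas j) (fun j => (continuous_pow _).aestronglyMeasurable)

theorem integral_prod_comp_eq_zero_of_not_eachValueRepeated {a : ι → Ω → ℝ}
    (hind : iIndepFun a μ) (hmeas : ∀ j, AEMeasurable (a j) μ) (hmean : ∀ j, ∫ ω, a j ω ∂μ = 0)
    {d : κ → ι} (hd : ¬ EachValueRepeated d) : ∫ ω, ∏ k, a (d k) ω ∂μ = 0 := by
  classical
  obtain ⟨k, hk⟩ : ∃ k, ∀ k' ≠ k, d k' ≠ d k := by simpa [EachValueRepeated] using hd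
  have hsingle : #{k' | d k' = d k} = 1 :=
    card_eq_one.2 ⟨k, by ext k'; by_cases h : k' = k <;> simp [h, hk]⟩
  rw [hind.integral_prod_comp_eq_prod_moment hmeas]
  exact prod_eq_zero (mem_image_of_mem d (mem_univ k)) (by simp [hsingle, hmean])

theorem abs_integral_prod_comp_le {a : ι → Ω → ℝ} (hind : iIndepFun a μ)
    (hmeas : ∀ j, AEMeasurable (a j) μ) {M : ℝ} (hM : 1 ≤ M)
    (hmom : ∀ j, ∀ m ≤ Fintype.card κ, |∫ ω, a j ω ^ m ∂μ| ≤ M) (d : κ → ι) :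
    |∫ ω, ∏ k, a (d k) ω ∂μ| ≤ M ^ Fintype.card κ := by
  classical
  rw [hind.integral_prod_comp_eq_prod_moment hmeas, abs_prod]
  calc ∏ j ∈ univ.image d, |∫ ω, a j ω ^ #{k | d k = j} ∂μ|
      ≤ ∏ _j ∈ univ.image d, M :=
        prod_le_prod (fun _ _ => abs_nonneg _) fun j _ => hmom j _ (card_filter_le _ _)
    _ ≤ M ^ Fintype.card κ := by
        rw [prod_const]; exact pow_le_pow_right₀ hM card_image_le

theorem integrable_prod_of_memLp {f : κ → Ω → ℝ} [Nonempty κ]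
    (hf : ∀ k, MemLp (f k) (Fintype.card κ) μ) : Integrable (fun ω => ∏ k, f k ω) μ := by
  have h := MemLp.prod' (s := univ) fun k _ => hf k
  rwa [sum_const, card_univ, nsmul_eq_mul, ENNReal.mul_inv_cancel (by simp) (by simp), inv_one,
    memLp_one_iff_integrable] at h

theorem memLp_of_integrable_abs_pow {f : Ω → ℝ} (hf : AEStronglyMeasurable f μ) {p : ℕ}
    (hp : p ≠ 0) (h : Integrable (fun ω => |f ω| ^ p) μ) : MemLp f p μ := by
  rw [← integrable_norm_rpow_iff hf (by simpa using hp) (by simp)]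
  simpa using h

theorem exists_abs_integral_pow_le {a : ι → Ω → ℝ}
    (hmom : ∀ k : ℕ, ∃ c : ℝ, ∀ j, ∫ ω, |a j ω| ^ k ∂μ ≤ c) (p : ℕ) :
    ∃ M : ℝ, 1 ≤ M ∧ ∀ j, ∀ m ≤ p, |∫ ω, a j ω ^ m ∂μ| ≤ M := by
  choose c hc using hmom
  have hsum : 0 ≤ ∑ m ∈ range (p + 1), |c m| := sum_nonneg fun m _ => abs_nonneg (c m)
  refine ⟨1 + ∑ m ∈ range (p + 1), |c m|, by linarith, fun j m hm => ?_⟩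
  calc |∫ ω, a j ω ^ m ∂μ| ≤ ∫ ω, |a j ω ^ m| ∂μ := abs_integral_le_integral_abs
    _ = ∫ ω, |a j ω| ^ m ∂μ := by simp_rw [abs_pow]
    _ ≤ |c m| := (hc m j).trans (le_abs_self _)
    _ ≤ ∑ m ∈ range (p + 1), |c m| :=
        single_le_sum (f := fun m => |c m|) (fun _ _ => abs_nonneg _) (mem_range.2 (by omega))
    _ ≤ 1 + ∑ m ∈ range (p + 1), |c m| := by linarith

end Moments

section Toeplitz

variable {Ω : Type*} [MeasurableSpace Ω] {μ : Measure Ω} {a : ℤ → Ω → ℝ}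

theorem integral_trace_toeplitz_pow_succ {p : ℕ} (hLp : ∀ j, MemLp (a j) (p + 1) μ) (n : ℕ) :
    ∫ ω, trace ((of fun i j : Fin n => a (i - j) ω) ^ (p + 1)) ∂μ
      = ∑ i : Fin (p + 1) → Fin n,
          ∫ ω, ∏ k, a (cyclicIncrements (fun k => (i k : ℤ)) k) ω ∂μ := by
  simp_rw [trace_pow_succ_eq_sum, of_apply]
  exact integral_finsetSum _ fun i _ => integrable_prod_of_memLp fun k => by simpa using hLp _

theorem abs_integral_trace_toeplitz_pow_succ_le (hind : iIndepFun a μ)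
    (hmeas : ∀ j, AEMeasurable (a j) μ) (hmean : ∀ j, ∫ ω, a j ω ∂μ = 0) {p : ℕ}
    (hLp : ∀ j, MemLp (a j) (p + 1) μ) {M : ℝ} (hM : 1 ≤ M)
    (hmom : ∀ j, ∀ m ≤ p + 1, |∫ ω, a j ω ^ m ∂μ| ≤ M) (n : ℕ) :
    |∫ ω, trace ((of fun i j : Fin n => a (i - j) ω) ^ (p + 1)) ∂μ|
      ≤ #{i : Fin (p + 1) → Fin n | EachValueRepeated (cyclicIncrements fun k => (i k : ℤ))}
          * M ^ (p + 1) := by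
  rw [integral_trace_toeplitz_pow_succ hLp, ← sum_filter_add_sum_filter_not univ
    (fun i : Fin (p + 1) → Fin n => EachValueRepeated (cyclicIncrements fun k => (i k : ℤ))),
    sum_eq_zero (s := filter (fun i => ¬ _) _) fun i hi =>
      integral_prod_comp_eq_zero_of_not_eachValueRepeated hind hmeas hmean (mem_filter.1 hi).2,
    add_zero]
  refine (abs_sum_le_sum_abs _ _).trans ?_
  rw [← nsmul_eq_mul]
  refine sum_le_card_nsmul _ _ _ fun i _ => ?_
  simpa using abs_integral_prod_comp_le (κ := Fin (p + 1)) hind hmeas hM (by simpa using hmom) _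

end Toeplitz

/-- Uniform bound for the normalized expected trace of powers of the random Toeplitz
matrix: if `(a_j)_{j ∈ ℤ}` are independent real random variables with mean zero and
uniformly bounded moments of all orders, and `Tₙ(i,j) = a_{i-j}`, then for every
`p ≥ 1` there is a constant `C_p` with
`n^{-(1+p/2)} |E[Tr(Tₙᵖ)]| ≤ C_p` for all `n`. -/
theorem normalized_expected_trace_toeplitz_bounded
    {Ω : Type*} [MeasurableSpace Ω] (μ : Measure Ω) [IsProbabilityMeasure μ]
    (a : ℤ → Ω → ℝ)
    (hmeas : ∀ j, Measurable (a j))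
    (hindep : iIndepFun a μ)
    (hmean : ∀ j, ∫ ω, a j ω ∂μ = 0)
    (hint : ∀ j k, Integrable (fun ω => |a j ω| ^ k) μ)
    (hmom : ∀ k : ℕ, ∃ c : ℝ, ∀ j, ∫ ω, |a j ω| ^ k ∂μ ≤ c)
    (p : ℕ) (hp : 1 ≤ p) :
    ∃ C : ℝ, ∀ n : ℕ,
      ((n : ℝ) ^ ((1 : ℝ) + (p : ℝ) / 2))⁻¹ *
          |∫ ω, Matrix.trace
            ((Matrix.of fun i j : Fin n => a ((i : ℤ) - (j : ℤ)) ω) ^ p) ∂μ| ≤ C := by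
  obtain ⟨p, rfl⟩ : ∃ p', p = p' + 1 := ⟨p - 1, by omega⟩
  obtain ⟨M, hM, hMmom⟩ := exists_abs_integral_pow_le hmom (p + 1)
  have hLp (j : ℤ) : MemLp (a j) (p + 1) μ := by
    exact_mod_cast memLp_of_integrable_abs_pow (hmeas j).aestronglyMeasurable p.succ_ne_zero
      (hint j (p + 1))
  refine ⟨3 ^ (p + 1) * (p + 1) ^ (p + 1) * M ^ (p + 1), fun n =>
    inv_mul_le_of_le_mul₀ (by positivity) (by positivity) ?_⟩
  have hcount := card_filter_eachValueRepeated_cyclicIncrements_le n p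
  calc _ ≤ _ := abs_integral_trace_toeplitz_pow_succ_le hindep (fun j => (hmeas j).aemeasurable)
        hmean hLp hM hMmom n
    _ ≤ ((n * ((p + 1) ^ (p + 1) * (2 * n + 1) ^ ((p + 1) / 2)) : ℕ) : ℝ) * M ^ (p + 1) :=
        mul_le_mul_of_nonneg_right (by exact_mod_cast hcount) (by positivity)
    _ = (p + 1) ^ (p + 1) * M ^ (p + 1) * ((n : ℝ) * (2 * n + 1) ^ ((p + 1) / 2)) := by
        push_cast; ring
    _ ≤ (p + 1) ^ (p + 1) * M ^ (p + 1)
          * (3 ^ (p + 1) * (n : ℝ) ^ ((1 : ℝ) + ((p + 1 : ℕ) : ℝ) / 2)) :=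
        mul_le_mul_of_nonneg_left (natCast_mul_two_mul_add_one_pow_le n (p + 1)) (by positivity)
    _ = _ := by ring
end
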